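/- Exception Masking Principle for Resilient TX10: if place p is failed (p ∉ dom(g)) and <s,g> --λ-->_p k with λ = v⊗ a synchronous exception, then v = DP (the DeadPlaceException). That is, no synchronous exception other than DeadPlaceException can be raised at a failed place. -/

import Mathlib

namespace TX10

abbrev Place := ℕ
abbrev VarName := ℕ
abbrev FieldName := ℕ
/-- Object identifiers: a home place together with a serial number. -/
abbrev ObjId := Place × ℕ

/-- The home place of an object id. -/
def home (o : ObjId) : Place := o.1

/-- Values: local object references, global references `o$home(o)`,
and the exception constants E, BadFieldSelection, BadGlobalRef, DeadPlaceException. -/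
inductive Val : Type where
  | obj (o : ObjId)
  | gref (o : ObjId)
  | exE
  | exBF
  | exBG
  | exDP
deriving DecidableEq

inductive Expr : Type where
  | val (v : Val)
  | var (x : VarName)
  | select (e : Expr) (f : FieldName)
  | newObj (fs : List (FieldName × Expr))
  | globalref (e : Expr)
  | valof (e : Expr)
deriving Inhabited

/-- Statements of TX10 (including the dynamic statements `atD` and `spawned`). -/
inductive Stmt : Type where
  | skip
  | throw (v : Val)
  | bind (x : VarName) (e : Expr) (s : Stmt)          -- val x = e s
  | assign (e1 : Expr) (f : FieldName) (e2 : Expr)    -- e1.f = e2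
  | seq (s t : Stmt)                                  -- {s t}
  | atE (p : Place) (x : VarName) (e : Expr) (s : Stmt)  -- at(p)(val x = e) s
  | async (s : Stmt)
  | finish (μ : List Val) (s : Stmt)                  -- finish_μ s
  | tryCatch (s t : Stmt)
  | atD (p : Place) (s : Stmt)                        -- dynamic at
  | spawned (s : Stmt)                                -- dynamic async
deriving Inhabited

/-- The asynchrony predicate (least such predicate). -/
inductive isAsync : Stmt → Prop where
  | spawned (s : Stmt) : isAsync (.spawned s)
  | atD {s : Stmt} (p : Place) : isAsync s → isAsync (.atD p s)
  | tryCatch {s : Stmt} (t : Stmt) : isAsync s → isAsync (.tryCatch s t)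
  | seq {s t : Stmt} : isAsync s → isAsync t → isAsync (.seq s t)

/-- The synchrony predicate (least such predicate). -/
inductive isSync : Stmt → Prop where
  | skip : isSync .skip
  | throw (v : Val) : isSync (.throw v)
  | bind (x : VarName) (e : Expr) (s : Stmt) : isSync (.bind x e s)
  | assign (e1 : Expr) (f : FieldName) (e2 : Expr) : isSync (.assign e1 f e2)
  | atE (p : Place) (x : VarName) (e : Expr) (s : Stmt) : isSync (.atE p x e s)
  | async (s : Stmt) : isSync (.async s)
  | finish (μ : List Val) (s : Stmt) : isSync (.finish μ s)
  | seqL {s : Stmt} (t : Stmt) : isSync s → isSync (.seq s t)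
  | seqR {s : Stmt} (t : Stmt) : isSync s → isSync (.seq t s)
  | atD {s : Stmt} (p : Place) : isSync s → isSync (.atD p s)
  | tryCatch {s : Stmt} (t : Stmt) : isSync s → isSync (.tryCatch s t)

/-- Objects: partial maps from field names to values. -/
abbrev Obj := FieldName → Option Val
/-- Local heaps: partial maps from object ids to objects. -/
abbrev Heap := ObjId → Option Obj
/-- Global heaps: partial maps from places to local heaps;
`g p = none` means place `p` is failed (or absent). -/
abbrev GHeap := Place → Option Heap

/-- Transition labels: ε, asynchronous exception v×, synchronous exception v⊗. -/
inductive Label : Type where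
  | eps
  | excA (v : Val)
  | excS (v : Val)
deriving DecidableEq

def substE (x : VarName) (v : Val) : Expr → Expr
  | .val w => .val w
  | .var y => if y = x then .val v else .var y
  | .select e f => .select (substE x v e) f
  | .newObj fs => .newObj (fs.attach.map (fun fe => (fe.1.1, substE x v fe.1.2)))
  | .globalref e => .globalref (substE x v e)
  | .valof e => .valof (substE x v e)
decreasing_by
  all_goals simp_wf
  all_goals try omega
  all_goals
    (obtain ⟨⟨f1, e1⟩, hmem⟩ := fe
     have := List.sizeOf_lt_of_mem hmem
     simp at this ⊢
     omega)

/-- Capture-respecting substitution `s[v/x]` (variables declared in the program are distinct). -/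
def subst (x : VarName) (v : Val) : Stmt → Stmt
  | .skip => .skip
  | .throw w => .throw w
  | .bind y e s => .bind y (substE x v e) (if y = x then s else subst x v s)
  | .assign e1 f e2 => .assign (substE x v e1) f (substE x v e2)
  | .seq s t => .seq (subst x v s) (subst x v t)
  | .atE p y e s => .atE p y (substE x v e) (if y = x then s else subst x v s)
  | .async s => .async (subst x v s)
  | .finish μ s => .finish μ (subst x v s)
  | .tryCatch s t => .tryCatch (subst x v s) (subst x v t)
  | .atD p s => .atD p (subst x v s)
  | .spawned s => .spawned (subst x v s)

/-- Local reachability in a heap: `Reach h v w` means `w` is reachable from `v`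
through the fields of objects in `h`. -/
inductive Reach (h : Heap) : Val → Val → Prop where
  | refl (v : Val) : Reach h v v
  | step {v : Val} {o : ObjId} {r : Obj} {f : FieldName} {w : Val} :
      Reach h v (.obj o) → h o = some r → r f = some w → Reach h v w

/-- Isomorphism of object graphs rooted at `v1` in `h1` and `v2` in `h2`,
witnessed by `ι`, which is the identity on global references. -/
structure GraphIso (h1 : Heap) (v1 : Val) (h2 : Heap) (v2 : Val) (ι : Val → Val) : Prop where
  root : ι v1 = v2
  reach : ∀ w, Reach h1 v1 w → Reach h2 v2 (ι w)
  inj : ∀ w w', Reach h1 v1 w → Reach h1 v1 w' → ι w = ι w' → w = w'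
  surj : ∀ u, Reach h2 v2 u → ∃ w, Reach h1 v1 w ∧ ι w = u
  fields : ∀ a r, Reach h1 v1 (Val.obj a) → h1 a = some r →
      ∃ a' r', ι (Val.obj a) = Val.obj a' ∧ h2 a' = some r' ∧ ∀ f, (r f).map ι = r' f
  grefFix : ∀ a, Reach h1 v1 (Val.gref a) → ι (Val.gref a) = Val.gref a

/-- Declarative specification of the copy operation `copy(v,q,g) = ⟨v',g'⟩`. -/
inductive CopySpec : Val → Place → GHeap → Val → GHeap → Prop where
  | nonObj (v : Val) (q : Place) (g : GHeap) :
      (∀ o : ObjId, v ≠ Val.obj o) → CopySpec v q g v g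
  | obj {o : ObjId} {q : Place} {g : GHeap} {h hsrc h' : Heap} {o' : ObjId} {ι : Val → Val} :
      g q = some h →
      g (home o) = some hsrc →
      (∀ a r, h a = some r → h' a = some r) →                -- h' extends h
      (∀ a : ObjId, h a = none → h' a ≠ none → home a = q) → -- fresh ids live at q
      h o' = none → h' o' ≠ none →                           -- o' is a fresh id
      GraphIso hsrc (Val.obj o) h' (Val.obj o') ι →
      (∀ w, Reach h' (Val.obj o') w →
        (∃ a : ObjId, w = Val.obj a ∧ h a = none ∧ h' a ≠ none) ∨ (∀ a : ObjId, w ≠ Val.obj a)) →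
      CopySpec (Val.obj o) q g (Val.obj o') (Function.update g q (some h'))

/-- Expression configurations: either `⟨e,h⟩` or a terminal heap (after a failure). -/
inductive EConf : Type where
  | run (e : Expr) (h : Heap)
  | done (h : Heap)

def initObj (fvs : List (FieldName × Val)) : Obj :=
  fun f => ((fvs.reverse.find? (fun fv => fv.1 == f)).map Prod.snd)

/-- Expression evaluation `⟨e,h⟩ --λ-->_p ⟨e',h'⟩ | h'`. -/
inductive EStep (p : Place) : Expr → Heap → Label → EConf → Prop where
  | newObj {fvs : List (FieldName × Val)} {o : ObjId} {h : Heap} :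
      home o = p → h o = none →
      EStep p (.newObj (fvs.map (fun fv => (fv.1, Expr.val fv.2)))) h .eps
        (.run (.val (.obj o)) (Function.update h o (some (initObj fvs))))
  | select {h : Heap} {o : ObjId} {r : Obj} {f : FieldName} {v : Val} :
      h o = some r → r f = some v →
      EStep p (.select (.val (.obj o)) f) h .eps (.run (.val v) h)
  | selectBad {h : Heap} {o : ObjId} {f : FieldName} :
      ((h o).bind (fun r => r f)) = none →
      EStep p (.select (.val (.obj o)) f) h (.excS .exBF) (.done h)
  | selectBadVal {h : Heap} {v : Val} {f : FieldName} :
      (∀ o : ObjId, v ≠ Val.obj o) →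
      EStep p (.select (.val v) f) h (.excS .exBF) (.done h)
  | globalref {h : Heap} {o : ObjId} : home o = p →
      EStep p (.globalref (.val (.obj o))) h .eps (.run (.val (.gref o)) h)
  | globalrefBad {h : Heap} {v : Val} :
      (∀ o : ObjId, v = Val.obj o → home o ≠ p) →
      EStep p (.globalref (.val v)) h (.excS .exBG) (.done h)
  | valof {h : Heap} {o : ObjId} : home o = p →
      EStep p (.valof (.val (.gref o))) h .eps (.run (.val (.obj o)) h)
  | valofBad {h : Heap} {v : Val} :
      (∀ o : ObjId, v = Val.gref o → home o ≠ p) →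
      EStep p (.valof (.val v)) h (.excS .exBG) (.done h)
  | selectCtx {e : Expr} {h : Heap} {l : Label} {e' : Expr} {h' : Heap} {f : FieldName} :
      EStep p e h l (.run e' h') →
      EStep p (.select e f) h l (.run (.select e' f) h')
  | selectCtxDone {e : Expr} {h : Heap} {l : Label} {h' : Heap} {f : FieldName} :
      EStep p e h l (.done h') →
      EStep p (.select e f) h l (.done h')
  | globalrefCtx {e : Expr} {h : Heap} {l : Label} {e' : Expr} {h' : Heap} :
      EStep p e h l (.run e' h') →
      EStep p (.globalref e) h l (.run (.globalref e') h')
  | globalrefCtxDone {e : Expr} {h : Heap} {l : Label} {h' : Heap} :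
      EStep p e h l (.done h') →
      EStep p (.globalref e) h l (.done h')
  | valofCtx {e : Expr} {h : Heap} {l : Label} {e' : Expr} {h' : Heap} :
      EStep p e h l (.run e' h') →
      EStep p (.valof e) h l (.run (.valof e') h')
  | valofCtxDone {e : Expr} {h : Heap} {l : Label} {h' : Heap} :
      EStep p e h l (.done h') →
      EStep p (.valof e) h l (.done h')
  | newObjCtx {fvs : List (FieldName × Val)} {f : FieldName} {e : Expr}
      {rest : List (FieldName × Expr)} {h : Heap} {l : Label} {e' : Expr} {h' : Heap} :
      EStep p e h l (.run e' h') →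
      EStep p (.newObj (fvs.map (fun fv => (fv.1, Expr.val fv.2)) ++ (f, e) :: rest)) h l
        (.run (.newObj (fvs.map (fun fv => (fv.1, Expr.val fv.2)) ++ (f, e') :: rest)) h')
  | newObjCtxDone {fvs : List (FieldName × Val)} {f : FieldName} {e : Expr}
      {rest : List (FieldName × Expr)} {h : Heap} {l : Label} {h' : Heap} :
      EStep p e h l (.done h') →
      EStep p (.newObj (fvs.map (fun fv => (fv.1, Expr.val fv.2)) ++ (f, e) :: rest)) h l (.done h')

/-- Statement configurations: `⟨s,g⟩` or a terminal global heap `g`. -/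
inductive Config : Type where
  | run (s : Stmt) (g : GHeap)
  | done (g : GHeap)

/-- Exception masking performed by `async`: synchronous exceptions become asynchronous. -/
def maskAsync : Label → Label
  | .eps => .eps
  | .excA v => .excA v
  | .excS v => .excA v

/-- `μ ∪ λ`: recording of an exception label into the state of `finish`. -/
def addLabel (μ : List Val) : Label → List Val
  | .eps => μ
  | .excA v => v :: μ
  | .excS v => v :: μ

/-- Label produced by (End of Finish); `dead` records whether the local place failed. -/
def endLabel (dead : Bool) (μ : List Val) : Label → Label
  | .eps => if μ = [] then .eps else if dead then .excS .exDP else .excS .exE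
  | _ => if dead then .excS .exDP else .excS .exE

/-- Label transformation performed by (At): a remote synchronous exception is masked
by a DeadPlaceException when the home place is failed. -/
def atLabel (dead : Bool) : Label → Label
  | .excS v => if dead then .excS .exDP else .excS v
  | l => l

/-- `l` is not a synchronous-exception label (i.e. `l ∈ {ε, v×}`). -/
def isNotSync : Label → Prop
  | .excS _ => False
  | _ => True

/-- The small-step transition relation `⟨s,g⟩ --λ-->_p ⟨s',g'⟩ | g'`.
The flag `res` enables the additional rules of Resilient TX10 (place failure and the
behaviour of constructs at failed places); with `res = false` (and total heaps) this is
exactly the TX10 semantics. -/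
inductive Step : Bool → Place → Stmt → GHeap → Label → Config → Prop where
  -- (Skip)
  | skip {res : Bool} {p : Place} {g : GHeap} :
      g p ≠ none → Step res p .skip g .eps (.done g)
  -- (Exception)
  | throw {res : Bool} {p : Place} {g : GHeap} {v : Val} :
      g p ≠ none → Step res p (.throw v) g (.excS v) (.done g)
  -- (Declare Val)
  | declVal {res : Bool} {p : Place} {g : GHeap} {x : VarName} {v : Val} {s : Stmt}
      {l : Label} {k : Config} :
      g p ≠ none → Step res p (subst x v s) g l k →
      Step res p (.bind x (.val v) s) g l k
  -- (Field Update)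
  | fieldUpdate {res : Bool} {p : Place} {g : GHeap} {h : Heap} {o : ObjId} {r : Obj}
      {f : FieldName} {v : Val} :
      g p = some h → h o = some r → (r f).isSome →
      Step res p (.assign (.val (.obj o)) f (.val v)) g .eps
        (.done (Function.update g p (some (Function.update h o (some (Function.update r f (some v)))))))
  -- (Bad Field Update)
  | fieldUpdateBad {res : Bool} {p : Place} {g : GHeap} {h : Heap} {o : ObjId}
      {f : FieldName} {v : Val} :
      g p = some h → ((h o).bind (fun r => r f)) = none →
      Step res p (.assign (.val (.obj o)) f (.val v)) g (.excS .exBF) (.done g)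
  | fieldUpdateBadVal {res : Bool} {p : Place} {g : GHeap} {w : Val} {f : FieldName} {e2 : Expr} :
      g p ≠ none → (∀ o : ObjId, w ≠ Val.obj o) →
      Step res p (.assign (.val w) f e2) g (.excS .exBF) (.done g)
  -- (Ctx): expression evaluation inside statements
  | ctxBind {res : Bool} {p : Place} {g : GHeap} {h : Heap} {x : VarName} {e : Expr}
      {s : Stmt} {l : Label} {e' : Expr} {h' : Heap} :
      g p = some h → EStep p e h l (.run e' h') →
      Step res p (.bind x e s) g l (.run (.bind x e' s) (Function.update g p (some h')))
  | ctxBindDone {res : Bool} {p : Place} {g : GHeap} {h : Heap} {x : VarName} {e : Expr}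
      {s : Stmt} {l : Label} {h' : Heap} :
      g p = some h → EStep p e h l (.done h') →
      Step res p (.bind x e s) g l (.done (Function.update g p (some h')))
  | ctxAssignL {res : Bool} {p : Place} {g : GHeap} {h : Heap} {e1 : Expr} {f : FieldName}
      {e2 : Expr} {l : Label} {e1' : Expr} {h' : Heap} :
      g p = some h → EStep p e1 h l (.run e1' h') →
      Step res p (.assign e1 f e2) g l (.run (.assign e1' f e2) (Function.update g p (some h')))
  | ctxAssignLDone {res : Bool} {p : Place} {g : GHeap} {h : Heap} {e1 : Expr} {f : FieldName}
      {e2 : Expr} {l : Label} {h' : Heap} :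
      g p = some h → EStep p e1 h l (.done h') →
      Step res p (.assign e1 f e2) g l (.done (Function.update g p (some h')))
  | ctxAssignR {res : Bool} {p : Place} {g : GHeap} {h : Heap} {o : ObjId} {f : FieldName}
      {e2 : Expr} {l : Label} {e2' : Expr} {h' : Heap} :
      g p = some h → EStep p e2 h l (.run e2' h') →
      Step res p (.assign (.val (.obj o)) f e2) g l
        (.run (.assign (.val (.obj o)) f e2') (Function.update g p (some h')))
  | ctxAssignRDone {res : Bool} {p : Place} {g : GHeap} {h : Heap} {o : ObjId} {f : FieldName}
      {e2 : Expr} {l : Label} {h' : Heap} :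
      g p = some h → EStep p e2 h l (.done h') →
      Step res p (.assign (.val (.obj o)) f e2) g l (.done (Function.update g p (some h')))
  | ctxAtE {res : Bool} {p q : Place} {g : GHeap} {h : Heap} {x : VarName} {e : Expr}
      {s : Stmt} {l : Label} {e' : Expr} {h' : Heap} :
      g p = some h → EStep p e h l (.run e' h') →
      Step res p (.atE q x e s) g l (.run (.atE q x e' s) (Function.update g p (some h')))
  | ctxAtEDone {res : Bool} {p q : Place} {g : GHeap} {h : Heap} {x : VarName} {e : Expr}
      {s : Stmt} {l : Label} {h' : Heap} :
      g p = some h → EStep p e h l (.done h') →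
      Step res p (.atE q x e s) g l (.done (Function.update g p (some h')))
  -- (Place Shift)
  | placeShift {res : Bool} {p q : Place} {g : GHeap} {x : VarName} {v v' : Val}
      {s : Stmt} {g' : GHeap} :
      g p ≠ none → g q ≠ none → CopySpec v q g v' g' →
      Step res p (.atE q x (.val v) s) g .eps
        (.run (.atD q (.seq (subst x v' s) .skip)) g')
  | placeShiftDeadTgt {p q : Place} {g : GHeap} {x : VarName} {e : Expr} {s : Stmt} :
      g q = none →
      Step true p (.atE q x e s) g (.excS .exDP) (.done g)
  | placeShiftDeadSrc {p q : Place} {g : GHeap} {x : VarName} {e : Expr} {s : Stmt} :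
      g p = none →
      Step true p (.atE q x e s) g (.excS .exDP) (.done g)
  -- (Spawn)
  | spawn {res : Bool} {p : Place} {g : GHeap} {s : Stmt} :
      g p ≠ none → Step res p (.async s) g .eps (.run (.spawned s) g)
  | spawnDead {p : Place} {g : GHeap} {s : Stmt} :
      g p = none → Step true p (.async s) g (.excS .exDP) (.done g)
  -- (Async)
  | asyncRun {res : Bool} {p : Place} {s : Stmt} {g : GHeap} {l : Label} {s' : Stmt} {g' : GHeap} :
      Step res p s g l (.run s' g') →
      Step res p (.spawned s) g (maskAsync l) (.run (.spawned s') g')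
  | asyncDone {res : Bool} {p : Place} {s : Stmt} {g : GHeap} {l : Label} {g' : GHeap} :
      Step res p s g l (.done g') →
      Step res p (.spawned s) g (maskAsync l) (.done g')
  -- (Finish)
  | finishStep {res : Bool} {p : Place} {s : Stmt} {g : GHeap} {l : Label} {s' : Stmt}
      {g' : GHeap} {μ : List Val} :
      Step res p s g l (.run s' g') →
      Step res p (.finish μ s) g .eps (.run (.finish (addLabel μ l) s') g')
  -- (End of Finish)
  | finishEnd {res : Bool} {p : Place} {s : Stmt} {g : GHeap} {l : Label} {g' : GHeap}
      {μ : List Val} :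
      Step res p s g l (.done g') →
      Step res p (.finish μ s) g (endLabel (g p).isNone μ l) (.done g')
  -- (Seq)
  | seqStep {res : Bool} {p : Place} {s : Stmt} {g : GHeap} {l : Label} {s' : Stmt}
      {g' : GHeap} {t : Stmt} :
      Step res p s g l (.run s' g') → isNotSync l →
      Step res p (.seq s t) g l (.run (.seq s' t) g')
  | seqStepSync {res : Bool} {p : Place} {s : Stmt} {g : GHeap} {v : Val} {s' : Stmt}
      {g' : GHeap} {t : Stmt} :
      Step res p s g (.excS v) (.run s' g') →
      Step res p (.seq s t) g (.excS v) (.run s' g')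
  -- (Seq Term)
  | seqTerm {res : Bool} {p : Place} {s : Stmt} {g : GHeap} {l : Label} {g' : GHeap} {t : Stmt} :
      g p ≠ none → Step res p s g l (.done g') → isNotSync l →
      Step res p (.seq s t) g l (.run t g')
  | seqTermSync {res : Bool} {p : Place} {s : Stmt} {g : GHeap} {v : Val} {g' : GHeap} {t : Stmt} :
      g p ≠ none → Step res p s g (.excS v) (.done g') →
      Step res p (.seq s t) g (.excS v) (.done g')
  -- (Par)
  | par {res : Bool} {p : Place} {s : Stmt} {g : GHeap} {l : Label} {s' : Stmt}
      {g' : GHeap} {t : Stmt} :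
      isAsync t → Step res p s g l (.run s' g') →
      Step res p (.seq t s) g l (.run (.seq t s') g')
  | parTerm {res : Bool} {p : Place} {s : Stmt} {g : GHeap} {l : Label} {g' : GHeap} {t : Stmt} :
      isAsync t → Step res p s g l (.done g') →
      Step res p (.seq t s) g l (.run t g')
  -- (Seq Failed Term)
  | seqFailedSync {p : Place} {s : Stmt} {g : GHeap} {l : Label} {g' : GHeap} {t : Stmt} :
      g p = none → isSync s → Step true p s g l (.done g') →
      Step true p (.seq s t) g (.excS .exDP) (.done g')
  | seqFailedAsync {p : Place} {s : Stmt} {g : GHeap} {l : Label} {g' : GHeap} {t : Stmt} :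
      g p = none → isAsync s → Step true p s g l (.done g') →
      Step true p (.seq s t) g (.excA .exDP) (.run t g')
  -- (At)
  | atRun {res : Bool} {p q : Place} {s : Stmt} {g : GHeap} {l : Label} {s' : Stmt} {g' : GHeap} :
      Step res q s g l (.run s' g') →
      Step res p (.atD q s) g (atLabel (g p).isNone l) (.run (.atD q s') g')
  | atDone {res : Bool} {p q : Place} {s : Stmt} {g : GHeap} {l : Label} {g' : GHeap} :
      Step res q s g l (.done g') →
      Step res p (.atD q s) g (atLabel (g p).isNone l) (.done g')
  -- (Try)
  | tryStep {res : Bool} {p : Place} {s : Stmt} {g : GHeap} {l : Label} {s' : Stmt}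
      {g' : GHeap} {t : Stmt} :
      Step res p s g l (.run s' g') → isNotSync l →
      Step res p (.tryCatch s t) g l (.run (.tryCatch s' t) g')
  | tryStepDone {res : Bool} {p : Place} {s : Stmt} {g : GHeap} {l : Label} {g' : GHeap} {t : Stmt} :
      Step res p s g l (.done g') → isNotSync l →
      Step res p (.tryCatch s t) g l (.done g')
  | tryHandle {res : Bool} {p : Place} {s : Stmt} {g : GHeap} {v : Val} {s' : Stmt}
      {g' : GHeap} {t : Stmt} :
      g p ≠ none → Step res p s g (.excS v) (.run s' g') →
      Step res p (.tryCatch s t) g .eps (.run (.seq s' t) g')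
  | tryHandleDone {res : Bool} {p : Place} {s : Stmt} {g : GHeap} {v : Val} {g' : GHeap} {t : Stmt} :
      g p ≠ none → Step res p s g (.excS v) (.done g') →
      Step res p (.tryCatch s t) g .eps (.run t g')
  | tryDead {p : Place} {s : Stmt} {g : GHeap} {v : Val} {s' : Stmt} {g' : GHeap} {t : Stmt} :
      g p = none → Step true p s g (.excS v) (.run s' g') →
      Step true p (.tryCatch s t) g (.excS v) (.run s' g')
  | tryDeadDone {p : Place} {s : Stmt} {g : GHeap} {v : Val} {g' : GHeap} {t : Stmt} :
      g p = none → Step true p s g (.excS v) (.done g') →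
      Step true p (.tryCatch s t) g (.excS v) (.done g')
  -- (Place Failure): any non-zero live place may fail at any moment
  | placeFailure {p : Place} {s : Stmt} {g : GHeap} :
      p ≠ 0 → g p ≠ none →
      Step true p s g .eps (.run s (Function.update g p none))
  -- (Local Failure): basic statements at a failed place
  | localSkip {p : Place} {g : GHeap} :
      g p = none → Step true p .skip g (.excS .exDP) (.done g)
  | localThrow {p : Place} {g : GHeap} {v : Val} :
      g p = none → Step true p (.throw v) g (.excS .exDP) (.done g)
  | localBind {p : Place} {g : GHeap} {x : VarName} {e : Expr} {s : Stmt} :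
      g p = none → Step true p (.bind x e s) g (.excS .exDP) (.done g)
  | localAssign {p : Place} {g : GHeap} {e1 : Expr} {f : FieldName} {e2 : Expr} :
      g p = none → Step true p (.assign e1 f e2) g (.excS .exDP) (.done g)

/-- Closedness of expressions with respect to a list of bound variables. -/
inductive ClosedE (Γ : List VarName) : Expr → Prop where
  | val (v : Val) : ClosedE Γ (.val v)
  | var {x : VarName} : x ∈ Γ → ClosedE Γ (.var x)
  | select {e : Expr} (f : FieldName) : ClosedE Γ e → ClosedE Γ (.select e f)
  | newObj {fs : List (FieldName × Expr)} :
      (∀ fe ∈ fs, ClosedE Γ fe.2) → ClosedE Γ (.newObj fs)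
  | globalref {e : Expr} : ClosedE Γ e → ClosedE Γ (.globalref e)
  | valof {e : Expr} : ClosedE Γ e → ClosedE Γ (.valof e)

/-- Closedness of statements with respect to a list of bound variables. -/
inductive Closed : List VarName → Stmt → Prop where
  | skip {Γ : List VarName} : Closed Γ .skip
  | throw {Γ : List VarName} (v : Val) : Closed Γ (.throw v)
  | bind {Γ : List VarName} {x : VarName} {e : Expr} {s : Stmt} :
      ClosedE Γ e → Closed (x :: Γ) s → Closed Γ (.bind x e s)
  | assign {Γ : List VarName} {e1 : Expr} {f : FieldName} {e2 : Expr} :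
      ClosedE Γ e1 → ClosedE Γ e2 → Closed Γ (.assign e1 f e2)
  | seq {Γ : List VarName} {s t : Stmt} : Closed Γ s → Closed Γ t → Closed Γ (.seq s t)
  | atE {Γ : List VarName} {p : Place} {x : VarName} {e : Expr} {s : Stmt} :
      ClosedE Γ e → Closed (x :: Γ) s → Closed Γ (.atE p x e s)
  | async {Γ : List VarName} {s : Stmt} : Closed Γ s → Closed Γ (.async s)
  | finish {Γ : List VarName} {μ : List Val} {s : Stmt} : Closed Γ s → Closed Γ (.finish μ s)
  | tryCatch {Γ : List VarName} {s t : Stmt} : Closed Γ s → Closed Γ t → Closed Γ (.tryCatch s t)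
  | atD {Γ : List VarName} {p : Place} {s : Stmt} : Closed Γ s → Closed Γ (.atD p s)
  | spawned {Γ : List VarName} {s : Stmt} : Closed Γ s → Closed Γ (.spawned s)

/-- All local heaps of `g` have finite domains (as is the case for heaps built at runtime). -/
def FiniteHeaps (g : GHeap) : Prop :=
  ∀ p h, g p = some h → Set.Finite {o : ObjId | h o ≠ none}

/-- A value is an admissible reference at place `q` in local heap `h`:
local object ids must be `q`-local and allocated; global references are unrestricted. -/
def okRef (q : Place) (h : Heap) : Val → Prop
  | .obj a => home a = q ∧ h a ≠ none
  | _ => True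

/-- Place-locality of a global heap. -/
def PlaceLocalG (g : GHeap) : Prop :=
  ∀ q h, g q = some h → ∀ o : ObjId, h o ≠ none →
    home o = q ∧ ∀ w, Reach h (.obj o) w → okRef q h w

/-- Values occurring in an expression. -/
inductive OccE : Expr → Val → Prop where
  | val (v : Val) : OccE (.val v) v
  | select {e : Expr} {v : Val} (f : FieldName) : OccE e v → OccE (.select e f) v
  | newObj {fs : List (FieldName × Expr)} {fe : FieldName × Expr} {v : Val} :
      fe ∈ fs → OccE fe.2 v → OccE (.newObj fs) v
  | globalref {e : Expr} {v : Val} : OccE e v → OccE (.globalref e) v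
  | valof {e : Expr} {v : Val} : OccE e v → OccE (.valof e) v

/-- Values occurring anywhere in a statement. -/
inductive OccS : Stmt → Val → Prop where
  | throw (v : Val) : OccS (.throw v) v
  | bindE {x e s v} : OccE e v → OccS (.bind x e s) v
  | bindS {x e s v} : OccS s v → OccS (.bind x e s) v
  | assignL {e1 f e2 v} : OccE e1 v → OccS (.assign e1 f e2) v
  | assignR {e1 f e2 v} : OccE e2 v → OccS (.assign e1 f e2) v
  | seqL {s t v} : OccS s v → OccS (.seq s t) v
  | seqR {s t v} : OccS t v → OccS (.seq s t) v
  | atEE {p x e s v} : OccE e v → OccS (.atE p x e s) v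
  | atES {p x e s v} : OccS s v → OccS (.atE p x e s) v
  | async {s v} : OccS s v → OccS (.async s) v
  | finishMu {μ s v} : v ∈ μ → OccS (.finish μ s) v
  | finishS {μ s v} : OccS s v → OccS (.finish μ s) v
  | tryL {s t v} : OccS s v → OccS (.tryCatch s t) v
  | tryR {s t v} : OccS t v → OccS (.tryCatch s t) v
  | atD {p s v} : OccS s v → OccS (.atD p s) v
  | spawned {s v} : OccS s v → OccS (.spawned s) v

/-- Values occurring in a statement *not* under any `at`/`atD` construct. -/
inductive OccTop : Stmt → Val → Prop where
  | throw (v : Val) : OccTop (.throw v) v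
  | bindE {x e s v} : OccE e v → OccTop (.bind x e s) v
  | bindS {x e s v} : OccTop s v → OccTop (.bind x e s) v
  | assignL {e1 f e2 v} : OccE e1 v → OccTop (.assign e1 f e2) v
  | assignR {e1 f e2 v} : OccE e2 v → OccTop (.assign e1 f e2) v
  | seqL {s t v} : OccTop s v → OccTop (.seq s t) v
  | seqR {s t v} : OccTop t v → OccTop (.seq s t) v
  | atEE {p x e s v} : OccE e v → OccTop (.atE p x e s) v
  | async {s v} : OccTop s v → OccTop (.async s) v
  | finishMu {μ s v} : v ∈ μ → OccTop (.finish μ s) v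
  | finishS {μ s v} : OccTop s v → OccTop (.finish μ s) v
  | tryL {s t v} : OccTop s v → OccTop (.tryCatch s t) v
  | tryR {s t v} : OccTop t v → OccTop (.tryCatch s t) v
  | spawned {s v} : OccTop s v → OccTop (.spawned s) v

/-- `OccUnder s p v`: value `v` occurs in `s` with innermost enclosing `at` place `p`. -/
inductive OccUnder : Stmt → Place → Val → Prop where
  | atETop {p x e s v} : OccTop s v → OccUnder (.atE p x e s) p v
  | atEDeep {p x e s q v} : OccUnder s q v → OccUnder (.atE p x e s) q v
  | atDTop {p s v} : OccTop s v → OccUnder (.atD p s) p v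
  | atDDeep {p s q v} : OccUnder s q v → OccUnder (.atD p s) q v
  | bindS {x e s q v} : OccUnder s q v → OccUnder (.bind x e s) q v
  | seqL {s t q v} : OccUnder s q v → OccUnder (.seq s t) q v
  | seqR {s t q v} : OccUnder t q v → OccUnder (.seq s t) q v
  | async {s q v} : OccUnder s q v → OccUnder (.async s) q v
  | finishS {μ s q v} : OccUnder s q v → OccUnder (.finish μ s) q v
  | tryL {s t q v} : OccUnder s q v → OccUnder (.tryCatch s t) q v
  | tryR {s t q v} : OccUnder t q v → OccUnder (.tryCatch s t) q v
  | spawned {s q v} : OccUnder s q v → OccUnder (.spawned s) q v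

/-- Place-locality of a configuration `⟨s,g⟩`. -/
def ConfLocal (s : Stmt) (g : GHeap) : Prop :=
  PlaceLocalG g ∧
  (∀ (p : Place) (o : ObjId), OccUnder s p (.obj o) → ∃ h, g p = some h ∧ h o ≠ none) ∧
  (∀ a : ObjId, OccS s (.gref a) → ∃ h, g (home a) = some h ∧ h a ≠ none)

/-- Evaluation contexts. -/
inductive ECtx : (Stmt → Stmt) → Prop where
  | hole : ECtx id
  | seqL {E : Stmt → Stmt} (t : Stmt) : ECtx E → ECtx (fun s => .seq (E s) t)
  | seqR {E : Stmt → Stmt} {t : Stmt} : isAsync t → ECtx E → ECtx (fun s => .seq t (E s))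
  | atD {E : Stmt → Stmt} (p : Place) : ECtx E → ECtx (fun s => .atD p (E s))
  | spawned {E : Stmt → Stmt} : ECtx E → ECtx (fun s => .spawned (E s))
  | finish {E : Stmt → Stmt} (μ : List Val) : ECtx E → ECtx (fun s => .finish μ (E s))
  | tryCatch {E : Stmt → Stmt} (t : Stmt) : ECtx E → ECtx (fun s => .tryCatch (E s) t)

/-- One step between configurations. -/
def CStep (res : Bool) (p : Place) (l : Label) (k k' : Config) : Prop :=
  ∃ s g, k = .run s g ∧ Step res p s g l k'

/-- Any number of ε-steps. -/
def EpsStar (res : Bool) (p : Place) : Config → Config → Prop :=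
  Relation.ReflTransGen (CStep res p .eps)

/-- Weak transition `==λ==>_p`. -/
def WStep (res : Bool) (p : Place) (l : Label) (k k' : Config) : Prop :=
  match l with
  | .eps => EpsStar res p k k'
  | _ => ∃ k1 k2, EpsStar res p k k1 ∧ CStep res p l k1 k2 ∧ EpsStar res p k2 k'

/-- Environment moves: concurrent-context updates of the shared heap.  For TX10
(`res = false`) the domain of places is preserved; for Resilient TX10 (`res = true`)
the domain may shrink (places may fail). -/
def EnvMove (res : Bool) (Φ : GHeap → GHeap) : Prop :=
  (∀ g, PlaceLocalG g → PlaceLocalG (Φ g)) ∧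
  (∀ g p, if res then ((Φ g p).isSome → (g p).isSome) else ((Φ g p).isSome ↔ (g p).isSome)) ∧
  (∀ g p h h', g p = some h → Φ g p = some h' → ∀ o : ObjId, h o ≠ none → h' o ≠ none)

/-- `R` is a weak bisimulation on closed configurations. -/
def IsWeakBisim (res : Bool) (R : Config → Config → Prop) : Prop :=
  ∀ k1 k2, R k1 k2 →
    ((∃ g, k1 = .done g ∧ k2 = .done g) ∨
     (∃ s t g, k1 = .run s g ∧ k2 = .run t g ∧
       (isSync s ↔ isSync t) ∧
       (∀ Φ, EnvMove res Φ → ∀ p : Place,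
         (∀ l s' g', Step res p s (Φ g) l (.run s' g') →
            ∃ t', WStep res p l (.run t (Φ g)) (.run t' g') ∧ R (.run s' g') (.run t' g')) ∧
         (∀ l g', Step res p s (Φ g) l (.done g') → WStep res p l (.run t (Φ g)) (.done g')) ∧
         (∀ l t' g', Step res p t (Φ g) l (.run t' g') →
            ∃ s', WStep res p l (.run s (Φ g)) (.run s' g') ∧ R (.run s' g') (.run t' g')) ∧
         (∀ l g', Step res p t (Φ g) l (.done g') → WStep res p l (.run s (Φ g)) (.done g')))))

/-- Weak bisimilarity: the largest weak bisimulation. -/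
def Bisim (res : Bool) (k1 k2 : Config) : Prop :=
  ∃ R, IsWeakBisim res R ∧ R k1 k2

/-- Statement contexts built from the TX10 constructs. -/
inductive SCtx : (Stmt → Stmt) → Prop where
  | hole : SCtx id
  | seqL {C : Stmt → Stmt} (t : Stmt) : SCtx C → SCtx (fun s => .seq (C s) t)
  | seqR {C : Stmt → Stmt} (t : Stmt) : SCtx C → SCtx (fun s => .seq t (C s))
  | async {C : Stmt → Stmt} : SCtx C → SCtx (fun s => .async (C s))
  | spawned {C : Stmt → Stmt} : SCtx C → SCtx (fun s => .spawned (C s))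
  | finish {C : Stmt → Stmt} (μ : List Val) : SCtx C → SCtx (fun s => .finish μ (C s))
  | atE {C : Stmt → Stmt} (p : Place) (x : VarName) (e : Expr) :
      SCtx C → SCtx (fun s => .atE p x e (C s))
  | atD {C : Stmt → Stmt} (p : Place) : SCtx C → SCtx (fun s => .atD p (C s))
  | tryL {C : Stmt → Stmt} (t : Stmt) : SCtx C → SCtx (fun s => .tryCatch (C s) t)
  | tryR {C : Stmt → Stmt} (t : Stmt) : SCtx C → SCtx (fun s => .tryCatch t (C s))

/-- `s` has no sub-term of the form `async s'`. -/
def NoAsync : Stmt → Prop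
  | .skip => True
  | .throw _ => True
  | .bind _ _ s => NoAsync s
  | .assign _ _ _ => True
  | .seq s t => NoAsync s ∧ NoAsync t
  | .atE _ _ _ s => NoAsync s
  | .async _ => False
  | .finish _ s => NoAsync s
  | .tryCatch s t => NoAsync s ∧ NoAsync t
  | .atD _ s => NoAsync s
  | .spawned s => NoAsync s

/-- `s` has no active remote computation: no substatement of the form `atD q s'`. -/
def IsLocalS : Stmt → Prop
  | .skip => True
  | .throw _ => True
  | .bind _ _ s => IsLocalS s
  | .assign _ _ _ => True
  | .seq s t => IsLocalS s ∧ IsLocalS t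
  | .atE _ _ _ s => IsLocalS s
  | .async s => IsLocalS s
  | .finish _ s => IsLocalS s
  | .tryCatch s t => IsLocalS s ∧ IsLocalS t
  | .atD _ _ => False
  | .spawned s => IsLocalS s

/-- `IsRemote p s`: every basic statement of `s` occurs under `atD q` for some `q ≠ p`. -/
inductive IsRemote (p : Place) : Stmt → Prop where
  | atD {q : Place} {s : Stmt} : q ≠ p → IsRemote p (.atD q s)
  | seq {s t : Stmt} : IsRemote p s → IsRemote p t → IsRemote p (.seq s t)
  | spawned {s : Stmt} : IsRemote p s → IsRemote p (.spawned s)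
  | finish {μ : List Val} {s : Stmt} : IsRemote p s → IsRemote p (.finish μ s)
  | tryCatch {s t : Stmt} : IsRemote p s → IsRemote p t → IsRemote p (.tryCatch s t)

/-- Substatement relation (reflexive containment). -/
inductive SubStmt : Stmt → Stmt → Prop where
  | refl (s : Stmt) : SubStmt s s
  | bind {u s : Stmt} {x e} : SubStmt u s → SubStmt u (.bind x e s)
  | seqL {u s t : Stmt} : SubStmt u s → SubStmt u (.seq s t)
  | seqR {u s t : Stmt} : SubStmt u t → SubStmt u (.seq s t)
  | atE {u s : Stmt} {p x e} : SubStmt u s → SubStmt u (.atE p x e s)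
  | async {u s : Stmt} : SubStmt u s → SubStmt u (.async s)
  | finish {u s : Stmt} {μ} : SubStmt u s → SubStmt u (.finish μ s)
  | tryL {u s t : Stmt} : SubStmt u s → SubStmt u (.tryCatch s t)
  | tryR {u s t : Stmt} : SubStmt u t → SubStmt u (.tryCatch s t)
  | atD {u s : Stmt} {p} : SubStmt u s → SubStmt u (.atD p s)
  | spawned {u s : Stmt} : SubStmt u s → SubStmt u (.spawned s)

/-- Application of a variable substitution (a finite list of bindings). -/
def applySub (ρ : List (VarName × Val)) (s : Stmt) : Stmt :=
  ρ.foldr (fun xv t => subst xv.1 xv.2 t) s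

/-- The happens-before relation of `s1, s2` inside program `s0`, for the semantics
selected by `res` (traces are sequences of transitions at place 0). -/
def HB (res : Bool) (s0 s1 s2 : Stmt) : Prop :=
  ∀ (n : ℕ) (S : ℕ → Config) (g0 : GHeap),
    S 0 = .run s0 g0 →
    (∀ i, i < n → ∃ l, CStep res 0 l (S i) (S (i+1))) →
    (∃ (E : Stmt → Stmt) (ρ : List (VarName × Val)) (g : GHeap),
        ECtx E ∧ S n = .run (E (applySub ρ s2)) g) →
    ∃ i, i ≤ n ∧ ∃ (E' : Stmt → Stmt) (ρ' : List (VarName × Val)) (g' : GHeap),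
        ECtx E' ∧ S i = .run (E' (applySub ρ' s1)) g'

/-- A value is well-formed in `g`: the object graph rooted at it has no dangling pointers. -/
def WFVal (v : Val) (g : GHeap) : Prop :=
  ∀ o : ObjId, v = Val.obj o →
    ∃ h, g (home o) = some h ∧ ∀ a : ObjId, Reach h (.obj o) (.obj a) → h a ≠ none

/-! Every rule that can fire at a failed place `p` either needs `p` to be live, raises `DP`
itself, emits no synchronous exception, or passes on unchanged the label of a premise at the
same place `p`. The remaining rules, (At) and (End of Finish), consult `(g p).isNone` and turn
every synchronous exception they emit into `DP`. -/

def Label.SyncIsDP (l : Label) : Prop :=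
  ∀ v, l = .excS v → v = .exDP

namespace Label

theorem syncIsDP_excS_exDP : (excS .exDP).SyncIsDP := by
  rintro v ⟨⟩
  rfl

theorem SyncIsDP.of_isNotSync {l : Label} (hl : isNotSync l) : l.SyncIsDP := by
  rintro v rfl
  exact hl.elim

theorem syncIsDP_eps : eps.SyncIsDP :=
  .of_isNotSync trivial

theorem syncIsDP_maskAsync (l : Label) : (maskAsync l).SyncIsDP :=
  .of_isNotSync (by cases l <;> trivial)

theorem syncIsDP_atLabel_true (l : Label) : (atLabel true l).SyncIsDP := by
  cases l
  case excS => exact syncIsDP_excS_exDP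
  all_goals exact .of_isNotSync trivial

theorem syncIsDP_endLabel_true (μ : List Val) (l : Label) : (endLabel true μ l).SyncIsDP := by
  cases l
  case eps =>
    by_cases hμ : μ = []
    · simpa only [endLabel, hμ, if_true] using syncIsDP_eps
    · simpa only [endLabel, hμ, if_false, if_true] using syncIsDP_excS_exDP
  all_goals exact syncIsDP_excS_exDP

end Label

open Label in
theorem Step.syncIsDP_of_failed {res : Bool} {p : Place} {s : Stmt} {g : GHeap} {l : Label}
    {k : Config} (h : Step res p s g l k) (hp : g p = none) : l.SyncIsDP := by
  induction h with
  | skip hlive | throw hlive | declVal hlive | fieldUpdateBadVal hlive | placeShift hlive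
  | spawn hlive | seqTerm hlive | seqTermSync hlive | tryHandle hlive | tryHandleDone hlive
  | placeFailure _ hlive => exact absurd hp hlive
  | fieldUpdate hgp | fieldUpdateBad hgp | ctxBind hgp | ctxBindDone hgp | ctxAssignL hgp
  | ctxAssignLDone hgp | ctxAssignR hgp | ctxAssignRDone hgp | ctxAtE hgp | ctxAtEDone hgp =>
    cases hp.symm.trans hgp
  | placeShiftDeadTgt | placeShiftDeadSrc | spawnDead | seqFailedSync | localSkip | localThrow
  | localBind | localAssign => exact syncIsDP_excS_exDP
  | seqStep _ hl | tryStep _ hl | tryStepDone _ hl => exact .of_isNotSync hl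
  | finishStep => exact syncIsDP_eps
  | seqFailedAsync => exact .of_isNotSync trivial
  | asyncRun | asyncDone => exact syncIsDP_maskAsync _
  | seqStepSync _ ih | par _ _ ih | parTerm _ _ ih | tryDead _ _ ih | tryDeadDone _ _ ih =>
    exact ih hp
  | finishEnd =>
    rw [hp]
    exact syncIsDP_endLabel_true _ _
  | atRun | atDone =>
    rw [hp]
    exact syncIsDP_atLabel_true _

/-- Exception Masking Principle — at a failed place the only synchronous
exception that can be raised is the DeadPlaceException. -/
theorem exception_masking {p : Place} {s : Stmt} {g : GHeap} {v : Val} {k : Config}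
    (hp : g p = none) (h : Step true p s g (.excS v) k) : v = .exDP :=
  h.syncIsDP_of_failed hp v rfl

end TX10
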